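/- Suppose the liquidation functions satisfy γ-monotonicity and the inverse demand function F satisfies F-monotonicity. Then the set of clearing solutions, partially ordered by the componentwise order on (p,q,M), is a nonempty complete lattice. -/

import Mathlib

/-!
The clearing map `Φ` is monotone on the box `[0, p̄] × [0, F(0, M̄)] × [0, M̄]` and maps it into
itself; moreover every clearing solution lies in this box, because `M = (x + Aᵀp − p̄)⁺ ≤ M̄` and
then `q = F(θ, M) ≤ F(0, M̄)`. The box is a complete lattice, so by Knaster–Tarski the fixed points
of `Φ` in it form a complete lattice, and its order is the componentwise one.
-/

open Finset

/-- Transpose-multiplication: `(A^T p)_i = ∑_j A_{ji} p_j`. -/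
noncomputable def ATmul {n : ℕ} (A : Matrix (Fin n) (Fin n) ℝ) (p : Fin n → ℝ) : Fin n → ℝ :=
  fun i => ∑ j, A j i * p j

/-- The clearing map `Φ(p,q,M) = (p̄ ∧ (x + S q + A^T p), F(∑_i γ_i(p,q), M), (x + A^T p − p̄)^+)`. -/
noncomputable def clearingMap {n m : ℕ} (x : Fin n → ℝ) (S : Matrix (Fin n) (Fin m) ℝ)
    (A : Matrix (Fin n) (Fin n) ℝ) (pbar : Fin n → ℝ)
    (γ : Fin n → (Fin n → ℝ) → (Fin m → ℝ) → (Fin m → ℝ))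
    (F : (Fin m → ℝ) → (Fin n → ℝ) → (Fin m → ℝ))
    (p : Fin n → ℝ) (q : Fin m → ℝ) (M : Fin n → ℝ) :
    (Fin n → ℝ) × (Fin m → ℝ) × (Fin n → ℝ) :=
  (fun i => min (pbar i) (x i + (∑ k, S i k * q k) + ATmul A p i),
   F (fun k => ∑ i, γ i p q k) M,
   fun i => max (x i + ATmul A p i - pbar i) 0)

/-- The maximal market liquidity `M̄ = (x + A^T p̄ − p̄)^+`. -/
noncomputable def Mbar {n : ℕ} (x : Fin n → ℝ) (A : Matrix (Fin n) (Fin n) ℝ)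
    (pbar : Fin n → ℝ) : Fin n → ℝ :=
  fun i => max (x i + ATmul A pbar i - pbar i) 0

/-- The set of clearing solutions: triples `(p,q,M) ∈ [0,p̄] × ℝ^m_+ × ℝ^n_+`
that are fixed points of the clearing map `Φ`. -/
noncomputable def clearingSet {n m : ℕ} (x : Fin n → ℝ) (S : Matrix (Fin n) (Fin m) ℝ)
    (A : Matrix (Fin n) (Fin n) ℝ) (pbar : Fin n → ℝ)
    (γ : Fin n → (Fin n → ℝ) → (Fin m → ℝ) → (Fin m → ℝ))
    (F : (Fin m → ℝ) → (Fin n → ℝ) → (Fin m → ℝ)) :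
    Set ((Fin n → ℝ) × (Fin m → ℝ) × (Fin n → ℝ)) :=
  {t | (∀ i, 0 ≤ t.1 i ∧ t.1 i ≤ pbar i) ∧ (∀ k, 0 ≤ t.2.1 k) ∧ (∀ i, 0 ≤ t.2.2 i) ∧
    clearingMap x S A pbar γ F t.1 t.2.1 t.2.2 = t}

open Set Function

namespace Prod

variable {α β : Type*} [ConditionallyCompleteLattice α] [ConditionallyCompleteLattice β]

instance instConditionallyCompleteLattice : ConditionallyCompleteLattice (α × β) where
  __ := instLattice α β
  __ := supSet α β
  __ := infSet α β
  isLUB_csSup _ hne hbdd := isLUB_prod.mpr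
    ⟨isLUB_csSup (hne.image fst) (bddAbove_prod.mp hbdd).1,
      isLUB_csSup (hne.image snd) (bddAbove_prod.mp hbdd).2⟩
  isGLB_csInf _ hne hbdd := isGLB_prod.mpr
    ⟨isGLB_csInf (hne.image fst) (bddBelow_prod.mp hbdd).1,
      isGLB_csInf (hne.image snd) (bddBelow_prod.mp hbdd).2⟩

end Prod

namespace OrderEmbedding

variable {L α : Type*} [CompleteLattice L] [Preorder α] (e : L ↪o α)

theorem exists_isLeast_upperBounds_inter_range {T : Set α} (hT : T ⊆ range e) :
    ∃ c, IsLeast (upperBounds T ∩ range e) c := by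
  refine ⟨e (sSup (e ⁻¹' T)), ⟨?_, mem_range_self _⟩, ?_⟩
  · rintro t ht
    obtain ⟨l, rfl⟩ := hT ht
    exact e.monotone (le_sSup ht)
  · rintro _ ⟨hub, l, rfl⟩
    exact e.le_iff_le.mpr (sSup_le fun l' hl' => e.le_iff_le.mp (hub hl'))

theorem exists_isGreatest_lowerBounds_inter_range {T : Set α} (hT : T ⊆ range e) :
    ∃ c, IsGreatest (lowerBounds T ∩ range e) c :=
  exists_isLeast_upperBounds_inter_range (L := Lᵒᵈ) (α := αᵒᵈ) e.dual hT

end OrderEmbedding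

section KnasterTarski

universe u

variable {α : Type u} [ConditionallyCompleteLattice α] {a b : α} {f : α → α}

/-- Knaster–Tarski applied inside `[a, b]`, which is a complete lattice. -/
theorem MonotoneOn.exists_orderEmbedding_range_eq_Icc_inter_fixedPoints (hab : a ≤ b)
    (hmaps : MapsTo f (Icc a b) (Icc a b)) (hmono : MonotoneOn f (Icc a b)) :
    ∃ (L : Type u) (_ : CompleteLattice L) (e : L ↪o α),
      range e = Icc a b ∩ fixedPoints f := by
  have : Fact (a ≤ b) := ⟨hab⟩
  let g : Icc a b →o Icc a b := ⟨hmaps.restrict f _ _, fun x y h => hmono x.2 y.2 h⟩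
  refine ⟨fixedPoints g, inferInstance,
    (OrderEmbedding.subtype _).trans (OrderEmbedding.subtype _), ?_⟩
  ext t
  constructor
  · rintro ⟨⟨⟨t, ht⟩, hfix⟩, rfl⟩
    exact ⟨ht, congrArg Subtype.val hfix⟩
  · rintro ⟨ht, hfix⟩
    exact ⟨⟨⟨t, ht⟩, Subtype.ext hfix⟩, rfl⟩

end KnasterTarski

section Clearing

variable {n m : ℕ} {x : Fin n → ℝ} {S : Matrix (Fin n) (Fin m) ℝ} {A : Matrix (Fin n) (Fin n) ℝ}
  {pbar : Fin n → ℝ} {γ : Fin n → (Fin n → ℝ) → (Fin m → ℝ) → (Fin m → ℝ)}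
  {F : (Fin m → ℝ) → (Fin n → ℝ) → (Fin m → ℝ)} {p p' : Fin n → ℝ} {q q' : Fin m → ℝ}
  {M M' : Fin n → ℝ}

theorem ATmul_nonneg (hA : ∀ i j, 0 ≤ A i j) (hp : 0 ≤ p) : 0 ≤ ATmul A p :=
  fun i => sum_nonneg fun j _ => mul_nonneg (hA j i) (hp j)

theorem ATmul_mono (hA : ∀ i j, 0 ≤ A i j) : Monotone (ATmul A) :=
  fun _ _ h i => sum_le_sum fun j _ => mul_le_mul_of_nonneg_left (h j) (hA j i)

theorem sum_liquidation_nonneg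
    (hγ : ∀ i p q, (∀ j, 0 ≤ p j ∧ p j ≤ pbar j) → (∀ k, 0 ≤ q k) → ∀ k, 0 ≤ γ i p q k)
    (hp : ∀ j, 0 ≤ p j ∧ p j ≤ pbar j) (hq : 0 ≤ q) : 0 ≤ fun k => ∑ i, γ i p q k :=
  fun k => sum_nonneg fun i _ => hγ i p q hp hq k

noncomputable def clearingTop (x : Fin n → ℝ) (A : Matrix (Fin n) (Fin n) ℝ) (pbar : Fin n → ℝ)
    (F : (Fin m → ℝ) → (Fin n → ℝ) → (Fin m → ℝ)) :
    (Fin n → ℝ) × (Fin m → ℝ) × (Fin n → ℝ) :=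
  (pbar, F 0 (Mbar x A pbar), Mbar x A pbar)

theorem clearingMap_snd_snd_le_Mbar (hA : ∀ i j, 0 ≤ A i j) (hp : p ≤ pbar) :
    (clearingMap x S A pbar γ F p q M).2.2 ≤ Mbar x A pbar :=
  fun i => max_le_max_right 0 (sub_le_sub_right (add_le_add_right (ATmul_mono hA hp i) _) _)

theorem clearingMap_mem_Icc (hx : 0 ≤ x) (hS : ∀ i k, 0 ≤ S i k) (hA : ∀ i j, 0 ≤ A i j)
    (hpbar : 0 ≤ pbar)
    (hγ : ∀ i p q, (∀ j, 0 ≤ p j ∧ p j ≤ pbar j) → (∀ k, 0 ≤ q k) → ∀ k, 0 ≤ γ i p q k)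
    (hFpos : ∀ θ M, (∀ k, 0 ≤ θ k) → (∀ i, 0 ≤ M i) → ∀ k, 0 ≤ F θ M k)
    (hFθ : ∀ θ₁ θ₂ M, (∀ k, 0 ≤ θ₂ k) → (∀ k, θ₂ k ≤ θ₁ k) → (∀ i, 0 ≤ M i) →
      ∀ k, F θ₁ M k ≤ F θ₂ M k)
    (hFM : ∀ θ M₁ M₂, (∀ k, 0 ≤ θ k) → (∀ i, 0 ≤ M₁ i) → (∀ i, M₁ i ≤ M₂ i) →
      ∀ k, F θ M₁ k ≤ F θ M₂ k)
    (hp : ∀ j, 0 ≤ p j ∧ p j ≤ pbar j) (hq : 0 ≤ q) (hM : M ∈ Icc 0 (Mbar x A pbar)) :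
    clearingMap x S A pbar γ F p q M ∈ Icc 0 (clearingTop x A pbar F) := by
  have hθ := sum_liquidation_nonneg hγ hp hq
  refine ⟨⟨fun i => le_min (hpbar i) ?_, hFpos _ _ hθ hM.1, fun i => le_max_right _ _⟩,
    ⟨fun i => min_le_left _ _, fun k => ?_, clearingMap_snd_snd_le_Mbar hA fun j => (hp j).2⟩⟩
  · exact add_nonneg (add_nonneg (hx i) (sum_nonneg fun k _ => mul_nonneg (hS i k) (hq k)))
      (ATmul_nonneg hA (fun j => (hp j).1) i)
  · exact (hFθ _ 0 M (fun _ => le_rfl) hθ hM.1 k).trans (hFM 0 M _ (fun _ => le_rfl) hM.1 hM.2 k)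

theorem clearingMap_mono (hS : ∀ i k, 0 ≤ S i k) (hA : ∀ i j, 0 ≤ A i j)
    (hγ : ∀ i p q, (∀ j, 0 ≤ p j ∧ p j ≤ pbar j) → (∀ k, 0 ≤ q k) → ∀ k, 0 ≤ γ i p q k)
    (hγmono : ∀ i p₁ p₂ q₁ q₂, (∀ j, 0 ≤ p₂ j) → (∀ j, p₂ j ≤ p₁ j) → (∀ j, p₁ j ≤ pbar j) →
      (∀ k, 0 ≤ q₂ k) → (∀ k, q₂ k ≤ q₁ k) → ∀ k, γ i p₁ q₁ k ≤ γ i p₂ q₂ k)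
    (hFθ : ∀ θ₁ θ₂ M, (∀ k, 0 ≤ θ₂ k) → (∀ k, θ₂ k ≤ θ₁ k) → (∀ i, 0 ≤ M i) →
      ∀ k, F θ₁ M k ≤ F θ₂ M k)
    (hFM : ∀ θ M₁ M₂, (∀ k, 0 ≤ θ k) → (∀ i, 0 ≤ M₁ i) → (∀ i, M₁ i ≤ M₂ i) →
      ∀ k, F θ M₁ k ≤ F θ M₂ k)
    (hp : 0 ≤ p) (hp' : p' ≤ pbar) (hq : 0 ≤ q) (hM : 0 ≤ M)
    (hpp : p ≤ p') (hqq : q ≤ q') (hMM : M ≤ M') :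
    clearingMap x S A pbar γ F p q M ≤ clearingMap x S A pbar γ F p' q' M' := by
  have hθ' := sum_liquidation_nonneg hγ (fun j => ⟨(hp j).trans (hpp j), hp' j⟩) (hq.trans hqq)
  have hθθ : (fun k => ∑ i, γ i p' q' k) ≤ fun k => ∑ i, γ i p q k :=
    fun k => sum_le_sum fun i _ => hγmono i p' p q' q hp hpp hp' hq hqq k
  refine ⟨fun i => min_le_min_left _ (add_le_add (add_le_add_right ?_ _) (ATmul_mono hA hpp i)),
    fun k => (hFθ _ _ M hθ' hθθ hM k).trans (hFM _ M M' hθ' hM hMM k),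
    fun i => max_le_max_right 0 (sub_le_sub_right (add_le_add_right (ATmul_mono hA hpp i) _) _)⟩
  exact sum_le_sum fun k _ => mul_le_mul_of_nonneg_left (hqq k) (hS i k)

theorem clearingSet_eq_Icc_inter_fixedPoints (hx : 0 ≤ x) (hS : ∀ i k, 0 ≤ S i k)
    (hA : ∀ i j, 0 ≤ A i j) (hpbar : 0 ≤ pbar)
    (hγ : ∀ i p q, (∀ j, 0 ≤ p j ∧ p j ≤ pbar j) → (∀ k, 0 ≤ q k) → ∀ k, 0 ≤ γ i p q k)
    (hFpos : ∀ θ M, (∀ k, 0 ≤ θ k) → (∀ i, 0 ≤ M i) → ∀ k, 0 ≤ F θ M k)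
    (hFθ : ∀ θ₁ θ₂ M, (∀ k, 0 ≤ θ₂ k) → (∀ k, θ₂ k ≤ θ₁ k) → (∀ i, 0 ≤ M i) →
      ∀ k, F θ₁ M k ≤ F θ₂ M k)
    (hFM : ∀ θ M₁ M₂, (∀ k, 0 ≤ θ k) → (∀ i, 0 ≤ M₁ i) → (∀ i, M₁ i ≤ M₂ i) →
      ∀ k, F θ M₁ k ≤ F θ M₂ k) :
    clearingSet x S A pbar γ F = Icc 0 (clearingTop x A pbar F) ∩
      fixedPoints fun t => clearingMap x S A pbar γ F t.1 t.2.1 t.2.2 := by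
  ext t
  constructor
  · rintro ⟨hp, hq, hM, hfix⟩
    have hMle : t.2.2 ≤ Mbar x A pbar := by
      rw [← hfix]
      exact clearingMap_snd_snd_le_Mbar hA fun j => (hp j).2
    refine ⟨?_, hfix⟩
    rw [← hfix]
    exact clearingMap_mem_Icc hx hS hA hpbar hγ hFpos hFθ hFM hp hq ⟨hM, hMle⟩
  · rintro ⟨⟨h0, htop⟩, hfix⟩
    exact ⟨fun i => ⟨h0.1 i, htop.1 i⟩, h0.2.1, h0.2.2, hfix⟩

end Clearing

theorem stmt4_general {n m : ℕ}
    (x : Fin n → ℝ) (hx : ∀ i, 0 ≤ x i)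
    (S : Matrix (Fin n) (Fin m) ℝ) (hS : ∀ i k, 0 ≤ S i k)
    (A : Matrix (Fin n) (Fin n) ℝ) (hA : ∀ i j, 0 ≤ A i j ∧ A i j ≤ 1)
    (pbar : Fin n → ℝ) (hpbar : ∀ i, 0 ≤ pbar i)
    (γ : Fin n → (Fin n → ℝ) → (Fin m → ℝ) → (Fin m → ℝ))
    (hγrange : ∀ i p q, (∀ j, 0 ≤ p j ∧ p j ≤ pbar j) → (∀ k, 0 ≤ q k) →
      ∀ k, 0 ≤ γ i p q k ∧ γ i p q k ≤ S i k)
    (hγmono : ∀ i p₁ p₂ q₁ q₂, (∀ j, 0 ≤ p₂ j) → (∀ j, p₂ j ≤ p₁ j) → (∀ j, p₁ j ≤ pbar j) →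
      (∀ k, 0 ≤ q₂ k) → (∀ k, q₂ k ≤ q₁ k) → ∀ k, γ i p₁ q₁ k ≤ γ i p₂ q₂ k)
    (F : (Fin m → ℝ) → (Fin n → ℝ) → (Fin m → ℝ))
    (hFpos : ∀ θ M, (∀ k, 0 ≤ θ k) → (∀ i, 0 ≤ M i) → ∀ k, 0 ≤ F θ M k)
    (hFθ : ∀ θ₁ θ₂ M, (∀ k, 0 ≤ θ₂ k) → (∀ k, θ₂ k ≤ θ₁ k) → (∀ i, 0 ≤ M i) →
      ∀ k, F θ₁ M k ≤ F θ₂ M k)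
    (hFM : ∀ θ M₁ M₂, (∀ k, 0 ≤ θ k) → (∀ i, 0 ≤ M₁ i) → (∀ i, M₁ i ≤ M₂ i) →
      ∀ k, F θ M₁ k ≤ F θ M₂ k) :
    (clearingSet x S A pbar γ F).Nonempty ∧
    (∀ T ⊆ clearingSet x S A pbar γ F, ∃ a ∈ clearingSet x S A pbar γ F,
      (∀ t ∈ T, t ≤ a) ∧ ∀ b ∈ clearingSet x S A pbar γ F, (∀ t ∈ T, t ≤ b) → a ≤ b) ∧
    (∀ T ⊆ clearingSet x S A pbar γ F, ∃ a ∈ clearingSet x S A pbar γ F,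
      (∀ t ∈ T, a ≤ t) ∧ ∀ b ∈ clearingSet x S A pbar γ F, (∀ t ∈ T, b ≤ t) → b ≤ a) := by
  have hA₀ : ∀ i j, 0 ≤ A i j := fun i j => (hA i j).1
  have hγ₀ : ∀ i p q, (∀ j, 0 ≤ p j ∧ p j ≤ pbar j) → (∀ k, 0 ≤ q k) → ∀ k, 0 ≤ γ i p q k :=
    fun i p q hp hq k => (hγrange i p q hp hq k).1
  have hMbar : 0 ≤ Mbar x A pbar := fun i => le_max_right _ _
  have htop : 0 ≤ clearingTop x A pbar F :=
    ⟨hpbar, hFpos 0 _ (fun _ => le_rfl) hMbar, hMbar⟩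
  have hmaps : MapsTo (fun t => clearingMap x S A pbar γ F t.1 t.2.1 t.2.2)
      (Icc 0 (clearingTop x A pbar F)) (Icc 0 (clearingTop x A pbar F)) := fun t ht =>
    clearingMap_mem_Icc hx hS hA₀ hpbar hγ₀ hFpos hFθ hFM (fun j => ⟨ht.1.1 j, ht.2.1 j⟩)
      ht.1.2.1 ⟨ht.1.2.2, ht.2.2.2⟩
  have hmono : MonotoneOn (fun t => clearingMap x S A pbar γ F t.1 t.2.1 t.2.2)
      (Icc 0 (clearingTop x A pbar F)) := fun s hs t ht hst =>
    clearingMap_mono hS hA₀ hγ₀ hγmono hFθ hFM hs.1.1 ht.2.1 hs.1.2.1 hs.1.2.2 hst.1 hst.2.1 hst.2.2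
  obtain ⟨L, _, e, he⟩ := hmono.exists_orderEmbedding_range_eq_Icc_inter_fixedPoints htop hmaps
  rw [clearingSet_eq_Icc_inter_fixedPoints hx hS hA₀ hpbar hγ₀ hFpos hFθ hFM, ← he]
  refine ⟨⟨e ⊥, mem_range_self _⟩, fun T hT => ?_, fun T hT => ?_⟩
  · obtain ⟨c, ⟨hub, hc⟩, hleast⟩ := e.exists_isLeast_upperBounds_inter_range hT
    exact ⟨c, hc, hub, fun d hd hdT => hleast ⟨hdT, hd⟩⟩
  · obtain ⟨c, ⟨hlb, hc⟩, hgreatest⟩ := e.exists_isGreatest_lowerBounds_inter_range hT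
    exact ⟨c, hc, hlb, fun d hd hdT => hgreatest ⟨hdT, hd⟩⟩

/-- Under γ-monotonicity and F-monotonicity, the set of clearing solutions, partially
ordered componentwise, is a nonempty complete lattice: it is nonempty and every subset
has a least upper bound and a greatest lower bound within the set. -/
theorem stmt4 {n m : ℕ} (hn : 1 ≤ n) (hm : 1 ≤ m)
    (x : Fin n → ℝ) (hx : ∀ i, 0 ≤ x i)
    (S : Matrix (Fin n) (Fin m) ℝ) (hS : ∀ i k, 0 ≤ S i k)
    (A : Matrix (Fin n) (Fin n) ℝ) (hA : ∀ i j, 0 ≤ A i j ∧ A i j ≤ 1)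
    (pbar : Fin n → ℝ) (hpbar : ∀ i, 0 ≤ pbar i)
    (γ : Fin n → (Fin n → ℝ) → (Fin m → ℝ) → (Fin m → ℝ))
    (hγrange : ∀ i p q, (∀ j, 0 ≤ p j ∧ p j ≤ pbar j) → (∀ k, 0 ≤ q k) →
      ∀ k, 0 ≤ γ i p q k ∧ γ i p q k ≤ S i k)
    (hγmono : ∀ i p₁ p₂ q₁ q₂, (∀ j, 0 ≤ p₂ j) → (∀ j, p₂ j ≤ p₁ j) → (∀ j, p₁ j ≤ pbar j) →
      (∀ k, 0 ≤ q₂ k) → (∀ k, q₂ k ≤ q₁ k) → ∀ k, γ i p₁ q₁ k ≤ γ i p₂ q₂ k)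
    (F : (Fin m → ℝ) → (Fin n → ℝ) → (Fin m → ℝ))
    (hFpos : ∀ θ M, (∀ k, 0 ≤ θ k) → (∀ i, 0 ≤ M i) → ∀ k, 0 ≤ F θ M k)
    (hFθ : ∀ θ₁ θ₂ M, (∀ k, 0 ≤ θ₂ k) → (∀ k, θ₂ k ≤ θ₁ k) → (∀ i, 0 ≤ M i) →
      ∀ k, F θ₁ M k ≤ F θ₂ M k)
    (hFM : ∀ θ M₁ M₂, (∀ k, 0 ≤ θ k) → (∀ i, 0 ≤ M₁ i) → (∀ i, M₁ i ≤ M₂ i) →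
      ∀ k, F θ M₁ k ≤ F θ M₂ k) :
    (clearingSet x S A pbar γ F).Nonempty ∧
    (∀ T ⊆ clearingSet x S A pbar γ F, ∃ a ∈ clearingSet x S A pbar γ F,
      (∀ t ∈ T, t ≤ a) ∧ ∀ b ∈ clearingSet x S A pbar γ F, (∀ t ∈ T, t ≤ b) → a ≤ b) ∧
    (∀ T ⊆ clearingSet x S A pbar γ F, ∃ a ∈ clearingSet x S A pbar γ F,
      (∀ t ∈ T, a ≤ t) ∧ ∀ b ∈ clearingSet x S A pbar γ F, (∀ t ∈ T, b ≤ t) → b ≤ a) :=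
  stmt4_general x hx S hS A hA pbar hpbar γ hγrange hγmono F hFpos hFθ hFM
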